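/- Consider Q elements q = 1,…,Q with sizes Δx_q > 0, numerical flux vectors f*_q ∈ R^{N+1} satisfying the periodic matching condition (f*_q)_{N+1} = (f*_{q+1})_1 for all q (indices mod Q), and arbitrary blending factors α_q ∈ R. Suppose the operators satisfy 1^T Δ^(V) = 0^T, 1^T (P D̃) = 0^T and 1^T (P B^(0)) = N · 1^T Δ^(S). Then the single-level blended discretization ∂_t ū_q = (1-α_q)·(-N/Δx_q)·Δ f*_q + α_q·(1/Δx_q)·(P D̃ f̃_q - P B^(0) f*_q) is conservative: ∑_{q=1}^{Q} Δx_q · 1^T ∂_t ū_q = 0, for any choice of volume flux vectors f̃_q ∈ R^N. -/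

import Mathlib

/-!
Summing the semi-discretization of one element against the constant vector turns every operator
into its column sums: the volume parts vanish, and both the finite-volume and the DG part reduce
to the boundary difference `(f*_q)_{N+1} - (f*_q)_1`, scaled by the same `-N / Δx_q`. Hence each
element contributes `-N ((f*_q)_{N+1} - (f*_q)_1)` to the total mass, whatever `α_q` is, and
these contributions telescope around the periodic mesh.
-/

open Matrix Finset

theorem sum_mulVec_eq_one_vecMul_dotProduct {m n R : Type*} [Fintype m] [Fintype n]
    [CommSemiring R] (M : Matrix m n R) (v : n → R) :
    ∑ i, (M *ᵥ v) i = ((fun _ => 1) ᵥ* M) ⬝ᵥ v := by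
  rw [← dotProduct_mulVec, ← one_dotProduct]
  rfl

theorem sum_single_mulVec {m n R : Type*} [Fintype m] [Fintype n] [DecidableEq m]
    [DecidableEq n] [NonUnitalNonAssocSemiring R] (i : m) (j : n) (c : R) (v : n → R) :
    ∑ k, (single i j c *ᵥ v) k = c * v j := by
  simp [single_mulVec, Function.update_apply]

theorem Fintype.sum_sub_eq_zero_of_eq_add {G M : Type*} [AddGroup G] [Fintype G]
    [AddCommGroup M] (a b : G → M) (g : G) (h : ∀ x, a x = b (x + g)) :
    ∑ x, (a x - b x) = 0 := by
  rw [sum_sub_distrib, sub_eq_zero, Fintype.sum_congr _ _ h]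
  exact Fintype.sum_equiv (Equiv.addRight g) _ _ fun _ => rfl

theorem sum_mulVec_eq_last_sub_zero {N : ℕ} (hN : 0 < N)
    (ΔS : Matrix (Fin N) (Fin (N + 1)) ℝ)
    (hΔS : ∀ i j, ΔS i j =
      if (i : ℕ) = 0 ∧ (j : ℕ) = 0 then -1
      else if (i : ℕ) = N - 1 ∧ (j : ℕ) = N then 1
      else 0)
    (f : Fin (N + 1) → ℝ) :
    ∑ i, (ΔS *ᵥ f) i = f (Fin.last N) - f 0 := by
  have hsingle : ΔS = single ⟨N - 1, by omega⟩ (Fin.last N) 1 - single ⟨0, hN⟩ 0 1 := by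
    ext i j
    rw [hΔS]
    simp only [Matrix.sub_apply, single_apply, Fin.ext_iff, Fin.val_last, Fin.val_zero]
    split_ifs <;> first | omega | norm_num
  simp only [hsingle, sub_mulVec, Pi.sub_apply, sum_sub_distrib, sum_single_mulVec, one_mul]

/-- the single-level blended discretization with a common
surface flux is conservative for arbitrary blending factors. -/
theorem single_level_blending_conservative (N Q : ℕ) (hN : 0 < N) [NeZero Q]
    (ΔV ΔS : Matrix (Fin N) (Fin (N + 1)) ℝ)
    (hΔS : ∀ i j, ΔS i j =
      if (i : ℕ) = 0 ∧ (j : ℕ) = 0 then -1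
      else if (i : ℕ) = N - 1 ∧ (j : ℕ) = N then 1
      else 0)
    (hΔV : Matrix.vecMul (fun _ => (1 : ℝ)) ΔV = 0)
    (PD : Matrix (Fin N) (Fin N) ℝ)
    (hPD : Matrix.vecMul (fun _ => (1 : ℝ)) PD = 0)
    (PB : Matrix (Fin N) (Fin (N + 1)) ℝ)
    (hPB : Matrix.vecMul (fun _ => (1 : ℝ)) PB =
      (N : ℝ) • Matrix.vecMul (fun _ => (1 : ℝ)) ΔS)
    (Δx : Fin Q → ℝ) (hΔx : ∀ q, 0 < Δx q)
    (α : Fin Q → ℝ)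
    (fstar : Fin Q → Fin (N + 1) → ℝ)
    (hmatch : ∀ q : Fin Q, fstar q (Fin.last N) = fstar (q + 1) 0)
    (fvol : Fin Q → Fin N → ℝ)
    (rhs : Fin Q → Fin N → ℝ)
    (hrhs : ∀ q, rhs q =
      (1 - α q) • ((-(N : ℝ) / Δx q) • ((ΔV + ΔS).mulVec (fstar q)))
      + (α q) • ((1 / Δx q) • (PD.mulVec (fvol q) - PB.mulVec (fstar q)))) :
    ∑ q, Δx q * ∑ i, rhs q i = 0 := by
  have hjump := sum_mulVec_eq_last_sub_zero hN ΔS hΔS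
  have hFV (f) : ∑ i, ((ΔV + ΔS) *ᵥ f) i = f (Fin.last N) - f 0 := by
    rw [sum_mulVec_eq_one_vecMul_dotProduct, vecMul_add, hΔV, zero_add,
      ← sum_mulVec_eq_one_vecMul_dotProduct, hjump]
  have hD (f) : ∑ i, (PD *ᵥ f) i = 0 := by
    rw [sum_mulVec_eq_one_vecMul_dotProduct, hPD, zero_dotProduct]
  have hB (f) : ∑ i, (PB *ᵥ f) i = N * (f (Fin.last N) - f 0) := by
    rw [sum_mulVec_eq_one_vecMul_dotProduct, hPB, smul_dotProduct,
      ← sum_mulVec_eq_one_vecMul_dotProduct, hjump, smul_eq_mul]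
  have helement (q) : Δx q * ∑ i, rhs q i = -N * (fstar q (Fin.last N) - fstar q 0) := by
    simp only [hrhs, Pi.add_apply, Pi.smul_apply, Pi.sub_apply, smul_eq_mul, sum_add_distrib,
      ← mul_sum, sum_sub_distrib, hFV, hD, hB]
    field_simp [(hΔx q).ne']
    ring
  have htelescope : ∑ q, (fstar q (Fin.last N) - fstar q 0) = 0 :=
    Fintype.sum_sub_eq_zero_of_eq_add (fstar · (Fin.last N)) (fstar · 0) 1 hmatch
  rw [sum_congr rfl fun q _ => helement q, ← mul_sum, htelescope, mul_zero]
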